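/- Restarted short-horizon occupancy measure bound (Lemma 2): Let ρ_T be the occupancy measure generated by (α, π, T) with discount γ, and let ρ_T^β be the occupancy measure generated by (ρ_T's state-action marginal as initial distribution, π, T) with discount β < γ. Then D_TV(ρ_T, ρ_T^β) ≤ (1−γ)β/(γ−β). -/
import Mathlib


variable {S A : Type*} [Fintype S] [Fintype A]

/-- The law of the state-action pair `(s_t, a_t)` of the Markov chain induced by
initial distribution `α`, policy `π` (with `π s a = π(a|s)`) and transition
kernel `T` (with `T s a s' = T(s'|s,a)`). -/
def law (α : S → ℝ) (π : S → A → ℝ) (T : S → A → S → ℝ) : ℕ → S → A → ℝ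
  | 0 => fun s a => α s * π s a
  | (t + 1) => fun s a => π s a * ∑ s', ∑ a', law α π T t s' a' * T s' a' s

/-- The normalized occupancy measure `ρ(s,a) = (1-γ) ∑_t γ^t P(s_t = s, a_t = a)`. -/
noncomputable def occ (γ : ℝ) (α : S → ℝ) (π : S → A → ℝ) (T : S → A → S → ℝ)
    (s : S) (a : A) : ℝ :=
  (1 - γ) * ∑' t : ℕ, γ ^ t * law α π T t s a


lemma law_nonneg (α : S → ℝ) (π : S → A → ℝ) (T : S → A → S → ℝ)
    (hα : ∀ s, 0 ≤ α s) (hπ : ∀ s a, 0 ≤ π s a) (hT : ∀ s a s', 0 ≤ T s a s') :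
    ∀ t s a, 0 ≤ law α π T t s a := by
  intro t
  induction t with
  | zero => intro s a; exact mul_nonneg (hα s) (hπ s a)
  | succ t ih =>
    intro s a
    refine mul_nonneg (hπ s a) (Finset.sum_nonneg fun s' _ => Finset.sum_nonneg fun a' _ => ?_)
    exact mul_nonneg (ih s' a') (hT s' a' s)

lemma law_sum_one (α : S → ℝ) (π : S → A → ℝ) (T : S → A → S → ℝ)
    (hαsum : ∑ s, α s = 1) (hπsum : ∀ s, ∑ a, π s a = 1)
    (hTsum : ∀ s a, ∑ s', T s a s' = 1) :
    ∀ t, ∑ s, ∑ a, law α π T t s a = 1 := by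
  intro t
  induction t with
  | zero =>
    simp only [law, ← Finset.mul_sum, hπsum, mul_one, hαsum]
  | succ t ih =>
    simp only [law]
    calc ∑ s, ∑ a, π s a * (∑ s', ∑ a', law α π T t s' a' * T s' a' s)
        = ∑ s, (∑ a, π s a) * (∑ s', ∑ a', law α π T t s' a' * T s' a' s) := by
          simp [Finset.sum_mul]
      _ = ∑ s, ∑ s', ∑ a', law α π T t s' a' * T s' a' s := by simp [hπsum]
      _ = ∑ s', ∑ s, ∑ a', law α π T t s' a' * T s' a' s := Finset.sum_comm
      _ = ∑ s', ∑ a', ∑ s, law α π T t s' a' * T s' a' s :=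
          Finset.sum_congr rfl fun s' _ => Finset.sum_comm
      _ = ∑ s', ∑ a', law α π T t s' a' * ∑ s, T s' a' s := by
          simp [Finset.mul_sum]
      _ = 1 := by simp [hTsum, ih]

/-- restart coefficient -/
noncomputable def cco (γ β : ℝ) (i : ℕ) : ℝ :=
  ∑ j ∈ Finset.range (i + 1), (1 - γ) * γ ^ (i - j) * (1 - β) * β ^ j

lemma cco_eq (γ β : ℝ) (hβ0 : 0 < β) (hβγ : β < γ) (hγ1 : γ < 1) (i : ℕ) :
    (1 - γ) * γ ^ i - cco γ β i
      = (1 - γ) * β / (γ - β) * ((1 - β) * β ^ i - (1 - γ) * γ ^ i) := by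
  have hne : β - γ ≠ 0 := by intro h; nlinarith [sub_eq_zero.mp h]
  have hne2 : γ - β ≠ 0 := fun h => hne (by linarith [sub_eq_zero.mp h])
  have hgs : (∑ j ∈ Finset.range (i + 1), β ^ j * γ ^ (i - j)) * (β - γ)
      = β ^ (i + 1) - γ ^ (i + 1) := by
    simpa using geom_sum₂_mul β γ (i + 1)
  have hcmul : cco γ β i * (β - γ) = (1 - γ) * (1 - β) * (β ^ (i + 1) - γ ^ (i + 1)) := by
    have h1 : cco γ β i = (1 - γ) * (1 - β) * ∑ j ∈ Finset.range (i + 1), β ^ j * γ ^ (i - j) := by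
      rw [cco, Finset.mul_sum]
      exact Finset.sum_congr rfl fun j _ => by ring
    rw [h1, mul_assoc, hgs]
  apply mul_right_cancel₀ hne
  rw [sub_mul, hcmul]
  field_simp
  ring

/-- Restarted short-horizon occupancy measure bound (Lemma 2): if `ρ_T` is the
γ-discounted occupancy measure of `(α,π,T)` and `ρ_T^β` is the β-discounted
occupancy measure of `(ρ_T, π, T)` (restarting from `ρ_T`), with `β < γ`, then
`D_TV(ρ_T, ρ_T^β) ≤ (1-γ)β/(γ-β)`. -/
theorem restart_occupancy_tv_bound
    (γ β : ℝ) (hβ0 : 0 < β) (hβγ : β < γ) (hγ1 : γ < 1)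
    (α : S → ℝ) (π : S → A → ℝ) (T : S → A → S → ℝ)
    (hα : ∀ s, 0 ≤ α s) (hαsum : ∑ s, α s = 1)
    (hπ : ∀ s a, 0 ≤ π s a) (hπsum : ∀ s, ∑ a, π s a = 1)
    (hT : ∀ s a s', 0 ≤ T s a s') (hTsum : ∀ s a, ∑ s', T s a s' = 1) :
    (1 / 2) * ∑ s, ∑ a,
        |occ γ α π T s a
          - ∑' i : ℕ, (∑ j ∈ Finset.range (i + 1),
              (1 - γ) * γ ^ (i - j) * (1 - β) * β ^ j) * law α π T i s a|
      ≤ (1 - γ) * β / (γ - β) := by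
  have hγ0 : 0 < γ := hβ0.trans hβγ
  have hβ1 : β < 1 := hβγ.trans hγ1
  set K : ℝ := (1 - γ) * β / (γ - β) with hKdef
  have hK0 : 0 ≤ K := by
    apply div_nonneg (by nlinarith) (by linarith)
  have hl0 := law_nonneg α π T hα hπ hT
  have hl1 := law_sum_one α π T hαsum hπsum hTsum
  have hle1 : ∀ t s a, law α π T t s a ≤ 1 := by
    intro t s a
    calc law α π T t s a ≤ ∑ a', law α π T t s a' :=
          Finset.single_le_sum (fun a' _ => hl0 t s a') (Finset.mem_univ a)
      _ ≤ ∑ s', ∑ a', law α π T t s' a' :=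
          Finset.single_le_sum (f := fun s' => ∑ a', law α π T t s' a')
            (fun s' _ => Finset.sum_nonneg fun a' _ => hl0 t s' a') (Finset.mem_univ s)
      _ = 1 := hl1 t
  have hsummG : ∀ r : ℝ, 0 ≤ r → r < 1 → ∀ s a,
      Summable (fun i : ℕ => r ^ i * law α π T i s a) := by
    intro r hr hr1 s a
    exact Summable.of_nonneg_of_le (fun i => mul_nonneg (pow_nonneg hr i) (hl0 i s a))
      (fun i => mul_le_of_le_one_right (pow_nonneg hr i) (hle1 i s a))
      (summable_geometric_of_lt_one hr hr1)
  have hd := cco_eq γ β hβ0 hβγ hγ1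
  -- summability of the difference series
  have hsd : ∀ s a, Summable (fun i => ((1 - γ) * γ ^ i - cco γ β i) * law α π T i s a) := by
    intro s a
    have heq : (fun i => ((1 - γ) * γ ^ i - cco γ β i) * law α π T i s a)
        = fun i => K * (1 - β) * (β ^ i * law α π T i s a)
            - K * (1 - γ) * (γ ^ i * law α π T i s a) := by
      funext i; rw [hd i]; ring
    rw [heq]
    exact ((hsummG β hβ0.le hβ1 s a).mul_left _).sub ((hsummG γ hγ0.le hγ1 s a).mul_left _)
  have hsγ : ∀ s a, Summable (fun i => (1 - γ) * (γ ^ i * law α π T i s a)) :=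
    fun s a => (hsummG γ hγ0.le hγ1 s a).mul_left _
  have hsc : ∀ s a, Summable (fun i => cco γ β i * law α π T i s a) := by
    intro s a
    have heq : (fun i => cco γ β i * law α π T i s a)
        = fun i => (1 - γ) * (γ ^ i * law α π T i s a)
            - ((1 - γ) * γ ^ i - cco γ β i) * law α π T i s a := by
      funext i; ring
    rw [heq]; exact (hsγ s a).sub (hsd s a)
  -- the pointwise bound
  have key : ∀ s a, |occ γ α π T s a - ∑' i, cco γ β i * law α π T i s a|
      ≤ ∑' i, |((1 - γ) * γ ^ i - cco γ β i) * law α π T i s a| := by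
    intro s a
    have h1 : occ γ α π T s a - ∑' i, cco γ β i * law α π T i s a
        = ∑' i, ((1 - γ) * γ ^ i - cco γ β i) * law α π T i s a := by
      unfold occ
      rw [← tsum_mul_left, ← Summable.tsum_sub (hsγ s a) (hsc s a)]
      exact tsum_congr fun i => by ring
    rw [h1]
    simpa only [Real.norm_eq_abs] using
      norm_tsum_le_tsum_norm (f := fun i => ((1 - γ) * γ ^ i - cco γ β i) * law α π T i s a)
        (by simpa only [Real.norm_eq_abs] using (hsd s a).abs)
  -- swap sums
  have hswap : ∑ s, ∑ a, ∑' i, |((1 - γ) * γ ^ i - cco γ β i) * law α π T i s a|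
      = ∑' i, ∑ s, ∑ a, |((1 - γ) * γ ^ i - cco γ β i) * law α π T i s a| := by
    rw [Summable.tsum_finsetSum (fun s _ => summable_sum fun a _ => (hsd s a).abs)]
    exact Finset.sum_congr rfl fun s _ =>
      (Summable.tsum_finsetSum (fun a _ => (hsd s a).abs)).symm
  have hinner : ∀ i, ∑ s, ∑ a, |((1 - γ) * γ ^ i - cco γ β i) * law α π T i s a|
      = |(1 - γ) * γ ^ i - cco γ β i| := by
    intro i
    calc ∑ s, ∑ a, |((1 - γ) * γ ^ i - cco γ β i) * law α π T i s a|
        = ∑ s, ∑ a, |(1 - γ) * γ ^ i - cco γ β i| * law α π T i s a :=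
          Finset.sum_congr rfl fun s _ => Finset.sum_congr rfl fun a _ => by
            rw [abs_mul, abs_of_nonneg (hl0 i s a)]
      _ = |(1 - γ) * γ ^ i - cco γ β i| * ∑ s, ∑ a, law α π T i s a := by
          simp [Finset.mul_sum]
      _ = |(1 - γ) * γ ^ i - cco γ β i| := by rw [hl1 i, mul_one]
  -- bound the coefficient series
  have hb : ∀ i, |(1 - γ) * γ ^ i - cco γ β i|
      ≤ K * (1 - β) * β ^ i + K * (1 - γ) * γ ^ i := by
    intro i
    rw [hd i, abs_mul, abs_of_nonneg hK0]
    calc K * |(1 - β) * β ^ i - (1 - γ) * γ ^ i|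
        ≤ K * ((1 - β) * β ^ i + (1 - γ) * γ ^ i) := by
          apply mul_le_mul_of_nonneg_left _ hK0
          refine (abs_sub _ _).trans ?_
          rw [abs_of_nonneg (mul_nonneg (by linarith) (pow_nonneg hβ0.le i)),
            abs_of_nonneg (mul_nonneg (by linarith) (pow_nonneg hγ0.le i))]
      _ = K * (1 - β) * β ^ i + K * (1 - γ) * γ ^ i := by ring
  have hsb : Summable (fun i : ℕ => K * (1 - β) * β ^ i + K * (1 - γ) * γ ^ i) :=
    ((summable_geometric_of_lt_one hβ0.le hβ1).mul_left _).add
      ((summable_geometric_of_lt_one hγ0.le hγ1).mul_left _)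
  have hsabs : Summable (fun i => |(1 - γ) * γ ^ i - cco γ β i|) :=
    Summable.of_nonneg_of_le (fun i => abs_nonneg _) hb hsb
  have htail : ∑' i, |(1 - γ) * γ ^ i - cco γ β i| ≤ 2 * K := by
    calc ∑' i, |(1 - γ) * γ ^ i - cco γ β i|
        ≤ ∑' i : ℕ, (K * (1 - β) * β ^ i + K * (1 - γ) * γ ^ i) :=
          Summable.tsum_le_tsum hb hsabs hsb
      _ = K * (1 - β) * (1 - β)⁻¹ + K * (1 - γ) * (1 - γ)⁻¹ := by
          rw [Summable.tsum_add ((summable_geometric_of_lt_one hβ0.le hβ1).mul_left _)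
            ((summable_geometric_of_lt_one hγ0.le hγ1).mul_left _),
            tsum_mul_left, tsum_mul_left,
            tsum_geometric_of_lt_one hβ0.le hβ1, tsum_geometric_of_lt_one hγ0.le hγ1]
      _ = 2 * K := by
          rw [mul_assoc, mul_assoc, mul_inv_cancel₀ (by linarith : (1:ℝ) - β ≠ 0),
            mul_inv_cancel₀ (by linarith : (1:ℝ) - γ ≠ 0)]
          ring
  -- assemble
  show (1 / 2) * ∑ s, ∑ a,
      |occ γ α π T s a - ∑' i, cco γ β i * law α π T i s a| ≤ K
  calc (1 / 2) * ∑ s, ∑ a, |occ γ α π T s a - ∑' i, cco γ β i * law α π T i s a|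
      ≤ (1 / 2) * ∑ s, ∑ a, ∑' i, |((1 - γ) * γ ^ i - cco γ β i) * law α π T i s a| := by
        have h2 : (0:ℝ) ≤ 1/2 := by norm_num
        exact mul_le_mul_of_nonneg_left
          (Finset.sum_le_sum fun s _ => Finset.sum_le_sum fun a _ => key s a) h2
    _ = (1 / 2) * ∑' i, |(1 - γ) * γ ^ i - cco γ β i| := by
        rw [hswap]; rw [tsum_congr hinner]
    _ ≤ (1 / 2) * (2 * K) := by linarith [htail]
    _ = K := by ring
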